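/- For every integer n ≥ 0 with W(n+1) ≥ 5, one has |q_{n+1} − q_n| ≤ e^{−W(n+1)}/(10·(n+1)). -/

import Mathlib

/-!
Put `R = W(n+1)`. Clearing denominators, `q n = 1 - G(R)` with
`G(R) = e^{-R} (2R⁴ - 3R³ - 20R² - 18R + 2) / (24 R (R+1)³)`, and a direct computation gives
`|G'(R)| ≤ e^{-R}/10` for `R ≥ 5`. On the other side, the tangent line of the convex map
`w ↦ w e^w` at `W(x)` has slope `(1 + W(x)) e^{W(x)} ≥ x`, so `W(n+2) - W(n+1) ≤ 1/(n+1)`.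
The mean value theorem for `G` on `[W(n+1), W(n+2)]` combines the two bounds.
-/

open Real

/-- Principal branch of the Lambert W function on `[0, ∞)`: for `x ≥ 0`,
`lambertW x` is the unique `y ≥ 0` with `y * exp y = x`. -/
noncomputable def lambertW (x : ℝ) : ℝ := Function.invFun (fun y : ℝ => y * Real.exp y) x

/-- `q n = 1 - e^{-R} (1 - 3/(2R) - 10/R² - 9/R³ + 1/R⁴) / (12 (1 + 1/R)³)` with `R = W(n+1)`. -/
noncomputable def q (n : ℕ) : ℝ :=
  1 - Real.exp (-(lambertW (n + 1))) *
      (1 - 3 / (2 * lambertW (n + 1)) - 10 / (lambertW (n + 1)) ^ 2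
        - 9 / (lambertW (n + 1)) ^ 3 + 1 / (lambertW (n + 1)) ^ 4) /
    (12 * (1 + 1 / (lambertW (n + 1))) ^ 3)

theorem add_one_mul_exp_mul_sub_le {a b : ℝ} (hb : 0 ≤ b) :
    (1 + a) * exp a * (b - a) ≤ b * exp b - a * exp a := by
  have hexp : exp a * (1 + (b - a)) ≤ exp b := by
    calc exp a * (1 + (b - a)) ≤ exp a * exp (b - a) := by
          gcongr; linarith [add_one_le_exp (b - a)]
      _ = exp b := by rw [← exp_add, add_sub_cancel]
  nlinarith [mul_le_mul_of_nonneg_left hexp hb, mul_nonneg (sq_nonneg (b - a)) (exp_pos a).le]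

theorem lambertW_mul_exp {x : ℝ} (hx : 0 ≤ x) : lambertW x * exp (lambertW x) = x := by
  obtain ⟨y, -, hy⟩ := intermediate_value_Icc hx
    (continuous_id.mul continuous_exp).continuousOn
    (show x ∈ Set.Icc (0 * exp 0) (x * exp x) from
      ⟨by simpa using hx, le_mul_of_one_le_right hx (one_le_exp hx)⟩)
  exact Function.invFun_eq (f := fun y : ℝ => y * exp y) ⟨y, hy⟩

theorem lambertW_nonneg {x : ℝ} (hx : 0 ≤ x) : 0 ≤ lambertW x := by
  by_contra! hneg
  linarith [lambertW_mul_exp hx, mul_neg_of_neg_of_pos hneg (exp_pos (lambertW x))]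

theorem lambertW_pos {x : ℝ} (hx : 0 < x) : 0 < lambertW x := by
  refine (lambertW_nonneg hx.le).lt_of_ne fun h0 => hx.ne ?_
  rw [← lambertW_mul_exp hx.le, ← h0, zero_mul]

theorem lambertW_le_lambertW {x y : ℝ} (hx : 0 ≤ x) (hxy : x ≤ y) :
    lambertW x ≤ lambertW y := by
  by_contra! hlt
  have := mul_lt_mul'' hlt (exp_lt_exp.2 hlt) (lambertW_nonneg (hx.trans hxy)) (exp_pos _).le
  rw [lambertW_mul_exp hx, lambertW_mul_exp (hx.trans hxy)] at this
  linarith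

theorem lambertW_sub_le {x y : ℝ} (hx : 0 < x) (hxy : x ≤ y) :
    lambertW y - lambertW x ≤ (y - x) / x := by
  have hmono := sub_nonneg.2 (lambertW_le_lambertW hx.le hxy)
  have htangent := add_one_mul_exp_mul_sub_le (a := lambertW x) (lambertW_nonneg (hx.le.trans hxy))
  rw [lambertW_mul_exp hx.le, lambertW_mul_exp (hx.le.trans hxy)] at htangent
  rw [le_div_iff₀ hx]
  nlinarith [lambertW_mul_exp hx.le, exp_pos (lambertW x)]

noncomputable def qCorrection (R : ℝ) : ℝ :=
  exp (-R) * (2 * R ^ 4 - 3 * R ^ 3 - 20 * R ^ 2 - 18 * R + 2) / (24 * R * (R + 1) ^ 3)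

noncomputable def qCorrectionDeriv (R : ℝ) : ℝ :=
  exp (-R) * (-2 * R ^ 6 + R ^ 5 + 32 * R ^ 4 + 72 * R ^ 3 + 50 * R ^ 2 - 10 * R - 2) /
    (24 * R ^ 2 * (R + 1) ^ 4)

theorem hasDerivAt_qCorrection {R : ℝ} (hR : 0 < R) :
    HasDerivAt qCorrection (qCorrectionDeriv R) R := by
  have hnum : HasDerivAt (fun R : ℝ => 2 * R ^ 4 - 3 * R ^ 3 - 20 * R ^ 2 - 18 * R + 2)
      (8 * R ^ 3 - 9 * R ^ 2 - 40 * R - 18) R :=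
    ((((((hasDerivAt_pow 4 R).const_mul 2).sub ((hasDerivAt_pow 3 R).const_mul 3)).sub
      ((hasDerivAt_pow 2 R).const_mul 20)).sub ((hasDerivAt_id R).const_mul 18)).add_const
      2).congr_deriv (by norm_num; ring)
  have hden : HasDerivAt (fun R : ℝ => 24 * R * (R + 1) ^ 3)
      (24 * (R + 1) ^ 3 + 72 * R * (R + 1) ^ 2) R :=
    (((hasDerivAt_id R).const_mul 24).mul (((hasDerivAt_id R).add_const 1).pow 3)).congr_deriv
      (by norm_num; ring)
  refine (((hasDerivAt_neg R).exp.mul hnum).div hden (by positivity)).congr_deriv ?_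
  simp only [Pi.mul_apply, qCorrectionDeriv]
  field_simp
  ring

-- In `t = R - 5`, both `24 R² (R + 1)⁴ ± 10 M(R)` (`M` the numerator) have positive
-- coefficients.
theorem abs_qCorrectionDeriv_le {R : ℝ} (hR : 5 ≤ R) :
    |qCorrectionDeriv R| ≤ exp (-R) / 10 := by
  unfold qCorrectionDeriv
  obtain ⟨t, ht, rfl⟩ : ∃ t : ℝ, 0 ≤ t ∧ R = t + 5 := ⟨R - 5, by linarith, by ring⟩
  rw [mul_div_assoc, abs_mul, abs_of_pos (exp_pos _), div_eq_mul_one_div (exp _)]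
  gcongr
  rw [abs_le, le_div_iff₀ (by positivity), div_le_iff₀ (by positivity)]
  constructor <;>
    nlinarith [pow_nonneg ht 2, pow_nonneg ht 3, pow_nonneg ht 4, pow_nonneg ht 5, pow_nonneg ht 6]

theorem abs_qCorrection_sub_le {a b : ℝ} (ha : 5 ≤ a) (hab : a ≤ b) :
    |qCorrection b - qCorrection a| ≤ exp (-a) / 10 * (b - a) := by
  have h := (convex_Ici a).norm_image_sub_le_of_norm_hasDerivWithin_le (C := exp (-a) / 10)
    (fun R (hR : a ≤ R) => (hasDerivAt_qCorrection (by linarith)).hasDerivWithinAt)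
    (fun R (hR : a ≤ R) => (abs_qCorrectionDeriv_le (ha.trans hR)).trans (by gcongr))
    Set.self_mem_Ici (Set.mem_Ici.2 hab)
  rwa [Real.norm_eq_abs, Real.norm_eq_abs, abs_of_nonneg (sub_nonneg.2 hab)] at h

theorem q_eq_one_sub_qCorrection (n : ℕ) : q n = 1 - qCorrection (lambertW (n + 1)) := by
  have hR : 0 < lambertW (n + 1) := lambertW_pos (by positivity)
  unfold q qCorrection
  field_simp
  ring

theorem stmt_13 (n : ℕ) (h : 5 ≤ lambertW (n + 1)) :
    |q (n + 1) - q n| ≤ Real.exp (-(lambertW (n + 1))) / (10 * ((n : ℝ) + 1)) := by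
  have hx : (0 : ℝ) < n + 1 := by positivity
  have hxy : (n : ℝ) + 1 ≤ ((n + 1 : ℕ) : ℝ) + 1 := by push_cast; linarith
  have hstep : lambertW ((n + 1 : ℕ) + 1) - lambertW (n + 1) ≤ 1 / (n + 1) := by
    simpa using lambertW_sub_le hx hxy
  rw [q_eq_one_sub_qCorrection, q_eq_one_sub_qCorrection, sub_sub_sub_cancel_left, abs_sub_comm]
  calc _ ≤ exp (-lambertW (n + 1)) / 10 * (lambertW ((n + 1 : ℕ) + 1) - lambertW (n + 1)) :=
        abs_qCorrection_sub_le h (lambertW_le_lambertW hx.le hxy)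
    _ ≤ exp (-lambertW (n + 1)) / 10 * (1 / (n + 1)) := by gcongr
    _ = _ := by field_simp
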